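/- Symmetry of the construction under the reflection condition, 2D case: let θ be a linear order on ℤ satisfying the reflection condition (a ≺_θ b iff -b-1 ≺_θ -a-1). For p ≤ q coordinatewise in ℤ^2, the forward path from p to q generated by θ with axis-order (x_1, x_2) (steps in x_1 at rank among the first q_1-p_1 of θ[p_1+p_2, q_1+q_2-1]) equals, as a set of points, the backward path from q to p generated by θ restricted to [-(q_1+q_2), -(p_1+p_2)-1] with axis-order (x_2, x_1), where at a point r the backward path decrements x_2 if -(r_1+r_2) is among the (q_2-p_2) θ-smallest elements of θ[-(q_1+q_2), -(p_1+p_2)-1], else decrements x_1. -/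

import Mathlib

open scoped Classical

/-- One step of the total order construction in `ℤ²` for the positive quadrant:
from the point `m`, step in the `x₁` direction if `m.1 + m.2` is among the
`q.1 - p.1` smallest elements (w.r.t. `r`) of the interval
`[p.1 + p.2, q.1 + q.2 - 1]`, and otherwise step in the `x₂` direction. -/
noncomputable def step2 (r : ℤ → ℤ → Prop) (p q m : ℤ × ℤ) : ℤ × ℤ :=
  if ((Finset.Icc (p.1 + p.2) (q.1 + q.2 - 1)).filter
      (fun y => r y (m.1 + m.2))).card < (q.1 - p.1).toNat
  then (m.1 + 1, m.2) else (m.1, m.2 + 1)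

/-- The point visited after `j` steps of the total order construction path
from `p` towards `q` generated by the order `r`. -/
noncomputable def path2 (r : ℤ → ℤ → Prop) (p q : ℤ × ℤ) : ℕ → ℤ × ℤ
  | 0 => p
  | j + 1 => step2 r p q (path2 r p q j)

/-- One step of the backward total order construction from `q` towards `p`:
at the point `m`, decrement `x₂` if `-(m.1 + m.2)` is among the `q.2 - p.2`
smallest elements (w.r.t. `r`) of the interval `[-(q.1+q.2), -(p.1+p.2)-1]`,
else decrement `x₁`. -/
noncomputable def back2 (r : ℤ → ℤ → Prop) (p q : ℤ × ℤ) : ℕ → ℤ × ℤ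
  | 0 => q
  | j + 1 =>
    let m := back2 r p q j
    if ((Finset.Icc (-(q.1 + q.2)) (-(p.1 + p.2) - 1)).filter
        (fun y => r y (-(m.1 + m.2)))).card < (q.2 - p.2).toNat
    then (m.1, m.2 - 1) else (m.1 - 1, m.2)

/-! At each point the sum `m.1 + m.2` determines the step, so the forward path is read off the
`r`-ranks of the diagonals `A, A+1, …, B-1` (`A = p.1 + p.2`, `B = q.1 + q.2`): the diagonal `s`
carries an `x₁`-step iff its rank is below `q.1 - p.1`. Walking back from `q`, the step leaving
diagonal `s + 1` is decided by the rank of `-s - 1` in the reflected interval; since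
`y ↦ -y - 1` reverses `r`, that rank is the number of diagonals above `s`, namely
`B - A - 1 - rank s`. It is below `q.2 - p.2` exactly when `rank s ≥ q.1 - p.1`, so the backward
path retraces the forward one, once we know the forward path ends at `q`: it makes exactly
`q.1 - p.1` steps in `x₁`, because the ranks are a bijection onto `0, …, B - A - 1`. -/

open Finset

section OrderRank

variable {α : Type*} (r : α → α → Prop) (s : Finset α)

noncomputable def orderRank (x : α) : ℕ := #(s.filter (r · x))

variable {r s} [IsStrictTotalOrder α r]

lemma orderRank_lt_card {x : α} (hx : x ∈ s) : orderRank r s x < #s :=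
  card_lt_card (filter_ssubset.2 ⟨x, hx, irrefl x⟩)

lemma orderRank_lt_orderRank {x y : α} (hx : x ∈ s) (hxy : r x y) :
    orderRank r s x < orderRank r s y :=
  card_lt_card ⟨monotone_filter_right s fun _ _ hzx => _root_.trans hzx hxy,
    fun hsub => irrefl x (mem_filter.1 (hsub (mem_filter.2 ⟨hx, hxy⟩))).2⟩

lemma orderRank_injOn : Set.InjOn (orderRank r s) s := by
  intro x hx y hy hxy
  rcases trichotomous_of r x y with hlt | heq | hgt
  · exact absurd hxy (orderRank_lt_orderRank hx hlt).ne
  · exact heq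
  · exact absurd hxy (orderRank_lt_orderRank hy hgt).ne'

lemma image_orderRank : s.image (orderRank r s) = range #s :=
  eq_of_subset_of_card_le
    (image_subset_iff.2 fun _ hx => mem_range.2 (orderRank_lt_card hx))
    (by rw [card_range, card_image_of_injOn orderRank_injOn])

lemma card_filter_orderRank_lt {a : ℕ} (ha : a ≤ #s) :
    #(s.filter (orderRank r s · < a)) = a := by
  have hrange : (range #s).filter (· < a) = range a := by
    ext i
    simp only [mem_filter, mem_range]
    omega
  rw [← card_image_of_injOn ((orderRank_injOn (r := r)).mono (filter_subset _ s)), ← filter_image (p := (· < a)),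
    image_orderRank, hrange, card_range]

lemma card_filter_rel_left {x : α} (hx : x ∈ s) :
    #(s.filter (r x ·)) = #s - 1 - orderRank r s x := by
  have hnot : s.filter (fun y => ¬ r y x) = insert x (s.filter (r x ·)) := by
    ext y
    simp only [mem_filter, mem_insert]
    constructor
    · rintro ⟨hy, hyx⟩
      rcases trichotomous_of r y x with hlt | rfl | hgt
      · exact absurd hlt hyx
      · exact Or.inl rfl
      · exact Or.inr ⟨hy, hgt⟩
    · rintro (rfl | ⟨hy, hxy⟩)
      · exact ⟨hx, irrefl y⟩
      · exact ⟨hy, asymm hxy⟩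
  have hsplit := card_filter_add_card_filter_not (s := s) (r · x)
  have hx' : x ∉ s.filter (r x ·) := fun h => irrefl x (mem_filter.1 h).2
  rw [hnot, card_insert_of_notMem hx'] at hsplit
  unfold orderRank
  omega

end OrderRank

lemma card_filter_rel_neg_sub_one {r : ℤ → ℤ → Prop}
    (hrefl : ∀ a b : ℤ, r a b ↔ r (-b - 1) (-a - 1)) (A B x : ℤ) :
    #((Icc (-B) (-A - 1)).filter (r · (-x - 1))) = #((Ico A B).filter (r x ·)) := by
  refine card_nbij' (fun y => -y - 1) (fun y => -y - 1) ?_ ?_ ?_ ?_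
  · intro y hy
    simp only [coe_filter, mem_Icc, mem_Ico, Set.mem_ofPred_eq] at hy ⊢
    refine ⟨⟨by omega, by omega⟩, ?_⟩
    simpa using (hrefl y (-x - 1)).1 hy.2
  · intro y hy
    simp only [coe_filter, mem_Icc, mem_Ico, Set.mem_ofPred_eq] at hy ⊢
    refine ⟨⟨by omega, by omega⟩, ?_⟩
    simpa using (hrefl (-y - 1) (-x - 1)).2 (by simpa using hy.2)
  · intro y _
    simp
  · intro y _
    simp

section Paths

variable {r : ℤ → ℤ → Prop} {p q : ℤ × ℤ}

lemma step2_eq_ite (m : ℤ × ℤ) :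
    step2 r p q m =
      if orderRank r (Ico (p.1 + p.2) (q.1 + q.2)) (m.1 + m.2) < (q.1 - p.1).toNat
      then (m.1 + 1, m.2) else (m.1, m.2 + 1) := by
  rw [step2, Icc_sub_one_right_eq_Ico]
  rfl

lemma path2_fst_add_snd (k : ℕ) :
    (path2 r p q k).1 + (path2 r p q k).2 = p.1 + p.2 + k := by
  induction k with
  | zero => simp [path2]
  | succ k ih =>
    rw [path2, step2_eq_ite]
    split_ifs <;> push_cast <;> omega

lemma path2_fst (k : ℕ) :
    (path2 r p q k).1 = p.1 + #((Ico (p.1 + p.2) (p.1 + p.2 + k)).filter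
      (orderRank r (Ico (p.1 + p.2) (q.1 + q.2)) · < (q.1 - p.1).toNat)) := by
  induction k with
  | zero => simp [path2]
  | succ k ih =>
    push_cast
    rw [path2, step2_eq_ite, path2_fst_add_snd, ← add_assoc,
      ← insert_Ico_right_eq_Ico_add_one (by omega), filter_insert]
    split_ifs
    · rw [card_insert_of_notMem (by simp), ih]
      push_cast
      ring
    · exact ih

variable [IsStrictTotalOrder ℤ r]

lemma path2_end_eq (h1 : p.1 ≤ q.1) (h2 : p.2 ≤ q.2) :
    path2 r p q ((q.1 - p.1) + (q.2 - p.2)).toNat = q := by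
  set N := ((q.1 - p.1) + (q.2 - p.2)).toNat
  have hB : p.1 + p.2 + (N : ℤ) = q.1 + q.2 := by omega
  have hfst := path2_fst (r := r) (p := p) (q := q) N
  rw [hB, card_filter_orderRank_lt (by rw [Int.card_Ico]; omega)] at hfst
  have hsum := path2_fst_add_snd (r := r) (p := p) (q := q) N
  ext <;> omega

lemma back2_succ_eq_path2 (hrefl : ∀ a b : ℤ, r a b ↔ r (-b - 1) (-a - 1))
    (h2 : p.2 ≤ q.2) {j k : ℕ} (hk : k < ((q.1 - p.1) + (q.2 - p.2)).toNat)
    (hj : back2 r p q j = path2 r p q (k + 1)) :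
    back2 r p q (j + 1) = path2 r p q k := by
  set m := path2 r p q k
  have hsum : m.1 + m.2 = p.1 + p.2 + k := path2_fst_add_snd k
  have hmem : m.1 + m.2 ∈ Ico (p.1 + p.2) (q.1 + q.2) := by
    rw [mem_Ico]
    omega
  have hcount : #((Icc (-(q.1 + q.2)) (-(p.1 + p.2) - 1)).filter
      (r · (-((path2 r p q (k + 1)).1 + (path2 r p q (k + 1)).2)))) =
      (q.1 + q.2 - (p.1 + p.2)).toNat - 1 - orderRank r (Ico (p.1 + p.2) (q.1 + q.2)) (m.1 + m.2) := by
    rw [path2_fst_add_snd, show -(p.1 + p.2 + ((k + 1 : ℕ) : ℤ)) = -(m.1 + m.2) - 1 by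
      push_cast; omega, card_filter_rel_neg_sub_one hrefl, card_filter_rel_left hmem, Int.card_Ico]
  have hlt := orderRank_lt_card (r := r) hmem
  rw [Int.card_Ico] at hlt
  rw [back2, hj, hcount, show path2 r p q (k + 1) = step2 r p q m from rfl, step2_eq_ite]
  split_ifs <;> ext <;> omega

lemma back2_eq_path2_sub (hrefl : ∀ a b : ℤ, r a b ↔ r (-b - 1) (-a - 1))
    (h1 : p.1 ≤ q.1) (h2 : p.2 ≤ q.2) {j : ℕ} (hj : j ≤ ((q.1 - p.1) + (q.2 - p.2)).toNat) :
    back2 r p q j = path2 r p q (((q.1 - p.1) + (q.2 - p.2)).toNat - j) := by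
  induction j with
  | zero => exact (path2_end_eq h1 h2).symm
  | succ j ih =>
    refine back2_succ_eq_path2 hrefl h2 (by omega) ?_
    rw [ih (by omega)]
    congr 1
    omega

end Paths

theorem stmt_16 (r : ℤ → ℤ → Prop) (h : IsStrictTotalOrder ℤ r)
    (hrefl : ∀ a b : ℤ, r a b ↔ r (-b - 1) (-a - 1))
    (p q : ℤ × ℤ) (h1 : p.1 ≤ q.1) (h2 : p.2 ≤ q.2) :
    {x : ℤ × ℤ | ∃ j ≤ ((q.1 - p.1) + (q.2 - p.2)).toNat, path2 r p q j = x} =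
    {x : ℤ × ℤ | ∃ j ≤ ((q.1 - p.1) + (q.2 - p.2)).toNat, back2 r p q j = x} := by
  have := h
  ext x
  constructor
  · rintro ⟨j, hj, rfl⟩
    refine ⟨_, Nat.sub_le _ j, ?_⟩
    rw [back2_eq_path2_sub hrefl h1 h2 (Nat.sub_le _ j), Nat.sub_sub_self hj]
  · rintro ⟨j, hj, rfl⟩
    exact ⟨_, Nat.sub_le _ j, (back2_eq_path2_sub hrefl h1 h2 hj).symm⟩
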